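/- arXiv:math/0605222 — 2 statements merged into one kernel-verified Lean document; each statement's English description precedes it below -/
import Mathlib

section
/- If R is a coincidence isometry of a lattice Γ, then so is R⁻¹, and the coincidence indices agree: [Γ : Γ ∩ RΓ] = [Γ : Γ ∩ R⁻¹Γ]. -/
/-!
If `Γ ∩ RΓ` has finite index in `Γ`, it is again a full lattice `H`, and comparing covolumes gives
`covol H = [Γ : H] · covol Γ = [RΓ : H] · covol RΓ`. An orthogonal map has `|det R| = 1`, so it
preserves Lebesgue measure and `covol RΓ = covol Γ`; hence `[RΓ : H] = [Γ : H]`. Applying `R⁻¹`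
turns `[RΓ : Γ ∩ RΓ]` into `[Γ : R⁻¹Γ ∩ Γ]`.
-/

/-- The standard hypercubic lattice `ℤ^d` inside `ℝ^d`. -/
def Zd (d : ℕ) : AddSubgroup (Fin d → ℝ) :=
  AddSubgroup.pi Set.univ fun _ => AddSubgroup.zmultiples (1 : ℝ)

/-- The dual lattice `Γ* = {x | ⟨x,y⟩ ∈ ℤ for all y ∈ Γ}`. -/
def dualLattice {d : ℕ} (Γ : AddSubgroup (Fin d → ℝ)) : AddSubgroup (Fin d → ℝ) where
  carrier := {x | ∀ y ∈ Γ, ∃ n : ℤ, dotProduct x y = (n : ℝ)}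
  zero_mem' := by
    intro y _
    exact ⟨0, by simp⟩
  add_mem' := by
    intro a b ha hb y hy
    obtain ⟨n, hn⟩ := ha y hy
    obtain ⟨m, hm⟩ := hb y hy
    exact ⟨n + m, by rw [add_dotProduct, hn, hm]; push_cast; ring⟩
  neg_mem' := by
    intro a ha y hy
    obtain ⟨n, hn⟩ := ha y hy
    exact ⟨-n, by rw [neg_dotProduct, hn]; push_cast; ring⟩

/-- `Γ` is a (full-rank) lattice in `ℝ^d`: the `ℤ`-span of an `ℝ`-basis. -/
def IsLattice {d : ℕ} (Γ : AddSubgroup (Fin d → ℝ)) : Prop :=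
  ∃ b : Module.Basis (Fin d) ℝ (Fin d → ℝ), Γ = (Submodule.span ℤ (Set.range ⇑b)).toAddSubgroup

/-- Two lattices are commensurate if their intersection has finite index in both. -/
def Commensurate {d : ℕ} (Γ₁ Γ₂ : AddSubgroup (Fin d → ℝ)) : Prop :=
  (Γ₁ ⊓ Γ₂).relIndex Γ₁ ≠ 0 ∧ (Γ₁ ⊓ Γ₂).relIndex Γ₂ ≠ 0

/-- The image `RΓ` of a lattice under a matrix `R`. -/
def latmap {d : ℕ} (R : Matrix (Fin d) (Fin d) ℝ) (Γ : AddSubgroup (Fin d → ℝ)) :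
    AddSubgroup (Fin d → ℝ) :=
  Γ.map R.mulVecLin.toAddMonoidHom

open Matrix Submodule MeasureTheory

theorem Submodule.span_eq_top_of_relIndex_ne_zero {K E : Type*} [Field K] [CharZero K]
    [AddCommGroup E] [Module K E] {N L : Submodule ℤ E} (hL : span K (L : Set E) = ⊤)
    (h : N.toAddSubgroup.relIndex L.toAddSubgroup ≠ 0) : span K (N : Set E) = ⊤ := by
  rw [eq_top_iff, ← hL, span_le]
  intro x hx
  have hmem : (N.toAddSubgroup.relIndex L.toAddSubgroup : K) • x ∈ span K (N : Set E) := by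
    rw [Nat.cast_smul_eq_nsmul]
    exact subset_span (AddSubgroup.nsmul_relIndex_mem N.toAddSubgroup hx)
  exact (smul_mem_iff _ (Nat.cast_ne_zero.2 h)).1 hmem

theorem IsZLattice.of_relIndex_ne_zero {E : Type*} [NormedAddCommGroup E] [NormedSpace ℝ E]
    {N L : Submodule ℤ E} [DiscreteTopology N] [DiscreteTopology L] [IsZLattice ℝ L]
    (h : N.toAddSubgroup.relIndex L.toAddSubgroup ≠ 0) : IsZLattice ℝ N :=
  ⟨span_eq_top_of_relIndex_ne_zero IsZLattice.span_top h⟩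

namespace ZLattice

variable {ι : Type*} [Fintype ι]

theorem relIndex_inf_eq_of_covolume_eq (L₁ L₂ : Submodule ℤ (ι → ℝ))
    [DiscreteTopology L₁] [IsZLattice ℝ L₁] [DiscreteTopology L₂] [IsZLattice ℝ L₂]
    (hcov : covolume L₁ = covolume L₂)
    (h : (L₁ ⊓ L₂).toAddSubgroup.relIndex L₁.toAddSubgroup ≠ 0) :
    (L₁ ⊓ L₂).toAddSubgroup.relIndex L₂.toAddSubgroup =
      (L₁ ⊓ L₂).toAddSubgroup.relIndex L₁.toAddSubgroup := by
  have : DiscreteTopology ↥(L₁ ⊓ L₂) := .of_subset ‹DiscreteTopology L₁› inf_le_left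
  have : IsZLattice ℝ (L₁ ⊓ L₂) := .of_relIndex_ne_zero h
  rw [← Nat.cast_inj (R := ℝ), ← covolume_div_covolume_eq_relIndex _ _ inf_le_left,
    ← covolume_div_covolume_eq_relIndex _ _ inf_le_right, hcov]

end ZLattice

namespace Matrix

variable {ι : Type*} [Fintype ι] [DecidableEq ι]

theorem abs_det_of_mem_orthogonalGroup {A : Matrix ι ι ℝ} (hA : A ∈ orthogonalGroup ι ℝ) :
    |A.det| = 1 := by
  have h := congrArg det ((mem_orthogonalGroup_iff ι ℝ).1 hA)
  rw [det_mul, det_transpose, det_one] at h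
  rcases mul_self_eq_one_iff.1 h with h | h <;> simp [h]

theorem measurePreserving_toLin'_of_abs_det_eq_one {M : Matrix ι ι ℝ} (hM : |M.det| = 1) :
    MeasurePreserving (toLin' M) := by
  refine ⟨(toLin' M).continuous_of_finiteDimensional.measurable, ?_⟩
  rw [Real.map_matrix_volume_pi_eq_smul_volume_pi (abs_pos.1 (hM ▸ one_pos)), abs_inv, hM,
    inv_one, ENNReal.ofReal_one, one_smul]

end Matrix

theorem ZLattice.covolume_comap_orthogonalGroup {ι : Type*} [Fintype ι] [DecidableEq ι]
    (L : Submodule ℤ (ι → ℝ)) [DiscreteTopology L] [IsZLattice ℝ L]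
    (A : orthogonalGroup ι ℝ) :
    covolume (ZLattice.comap ℝ L
      (UnitaryGroup.toLinearEquiv A).toContinuousLinearEquiv.toLinearMap) = covolume L :=
  covolume_comap L volume volume
    (measurePreserving_toLin'_of_abs_det_eq_one (abs_det_of_mem_orthogonalGroup A.2))

section latmap

variable {d : ℕ}

theorem latmap_mul (A B : Matrix (Fin d) (Fin d) ℝ) (Γ : AddSubgroup (Fin d → ℝ)) :
    latmap (A * B) Γ = latmap A (latmap B Γ) := by
  rw [latmap, latmap, latmap, AddSubgroup.map_map, mulVecLin_mul]
  rfl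

theorem latmap_one (Γ : AddSubgroup (Fin d → ℝ)) : latmap 1 Γ = Γ := by
  rw [latmap, mulVecLin_one]
  exact AddSubgroup.map_id Γ

theorem latmap_eq_comap (A : orthogonalGroup (Fin d) ℝ) (Γ : AddSubgroup (Fin d → ℝ)) :
    latmap (A : Matrix (Fin d) (Fin d) ℝ) Γ =
      Γ.comap (UnitaryGroup.toLinearEquiv A⁻¹).toLinearMap.toAddMonoidHom :=
  AddSubgroup.map_equiv_eq_comap_symm (UnitaryGroup.toLinearEquiv A).toAddEquiv Γ

theorem relIndex_inf_latmap_inv (Γ : AddSubgroup (Fin d → ℝ)) (A : orthogonalGroup (Fin d) ℝ) :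
    (Γ ⊓ latmap ((A⁻¹ : orthogonalGroup (Fin d) ℝ) : Matrix (Fin d) (Fin d) ℝ) Γ).relIndex Γ =
      (Γ ⊓ latmap (A : Matrix (Fin d) (Fin d) ℝ) Γ).relIndex
        (latmap (A : Matrix (Fin d) (Fin d) ℝ) Γ) := by
  have hinj : Function.Injective (A : Matrix (Fin d) (Fin d) ℝ).mulVecLin.toAddMonoidHom :=
    (UnitaryGroup.toLinearEquiv A).injective
  rw [← AddSubgroup.relIndex_map_map_of_injective _ _ hinj, AddSubgroup.map_inf _ _ _ hinj]
  change (latmap A Γ ⊓ latmap A (latmap (A⁻¹ : orthogonalGroup (Fin d) ℝ) Γ)).relIndex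
    (latmap A Γ) = _
  rw [← latmap_mul, ← UnitaryGroup.mul_val, mul_inv_cancel, UnitaryGroup.one_val, latmap_one,
    inf_comm]

end latmap

/-- If `R` is a coincidence isometry of a lattice `Γ`, so is `R⁻¹`, with the same
coincidence index: `[Γ : Γ ∩ RΓ] = [Γ : Γ ∩ R⁻¹Γ]`. -/
theorem stmt6 {d : ℕ} (Γ : AddSubgroup (Fin d → ℝ)) (hΓ : IsLattice Γ)
    (R : ↥(Matrix.orthogonalGroup (Fin d) ℝ))
    (h : (Γ ⊓ latmap (R : Matrix (Fin d) (Fin d) ℝ) Γ).relIndex Γ ≠ 0) :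
    (Γ ⊓ latmap ((R⁻¹ : ↥(Matrix.orthogonalGroup (Fin d) ℝ)) : Matrix (Fin d) (Fin d) ℝ) Γ).relIndex Γ ≠ 0 ∧
    (Γ ⊓ latmap (R : Matrix (Fin d) (Fin d) ℝ) Γ).relIndex Γ =
      (Γ ⊓ latmap ((R⁻¹ : ↥(Matrix.orthogonalGroup (Fin d) ℝ)) : Matrix (Fin d) (Fin d) ℝ) Γ).relIndex Γ := by
  obtain ⟨b, rfl⟩ := hΓ
  set L := span ℤ (Set.range b)
  have hRL : latmap (R : Matrix (Fin d) (Fin d) ℝ) L.toAddSubgroup = (ZLattice.comap ℝ L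
      (UnitaryGroup.toLinearEquiv R⁻¹).toContinuousLinearEquiv.toLinearMap).toAddSubgroup :=
    latmap_eq_comap R L.toAddSubgroup
  rw [relIndex_inf_latmap_inv]
  rw [hRL] at h ⊢
  have key := ZLattice.relIndex_inf_eq_of_covolume_eq L _
    (ZLattice.covolume_comap_orthogonalGroup L R⁻¹).symm h
  exact ⟨key ▸ h, key.symm⟩
end

section
/- For the denominator of a rational rotation R ∈ SO(3,ℚ): den(R) divides Σ(R) = [ℤ³ : ℤ³ ∩ Rℤ³], since Rℤ³ contains a vector a/den(R) with a ∈ ℤ³ primitive. -/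
open Matrix

variable {ι κ : Type*}

def IsPrimitive (v : ι → ℤ) : Prop :=
  ∀ p : ℕ, p.Prime → ∃ i, ¬ (p : ℤ) ∣ v i

lemma IsPrimitive.gcd_eq_one {a : Fin 3 → ℤ} (ha : IsPrimitive a) :
    Int.gcd (a 0) (Int.gcd (a 1) (a 2)) = 1 := by
  refine Nat.eq_one_iff_not_exists_prime_dvd.mpr fun p hp hdvd => ?_
  obtain ⟨h0, h12⟩ := Int.dvd_gcd_iff.mp hdvd
  obtain ⟨h1, h2⟩ := Int.dvd_gcd_iff.mp (Int.natCast_dvd_natCast.mp h12)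
  obtain ⟨i, hi⟩ := ha p hp
  fin_cases i <;> contradiction

section Primitive

variable [Fintype κ] [DecidableEq κ]

/-- For each prime `p ∈ P` pick an entry `A (I p) (J p)` prime to `p`; then
`y j = ∏ {p ∈ P | J p ≠ j}` makes the `I p`-th entry of `A y` prime to `p`, since all its
other terms are multiples of `p`. -/
lemma exists_isPrimitive_forall_mem_not_dvd_mulVec [Nonempty ι] [Nonempty κ]
    (A : Matrix ι κ ℤ) (P : Finset ℕ) (hP : ∀ p ∈ P, p.Prime)
    (hA : ∀ p ∈ P, ∃ i j, ¬ (p : ℤ) ∣ A i j) :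
    ∃ y : κ → ℤ, IsPrimitive y ∧ ∀ p ∈ P, ∃ i, ¬ (p : ℤ) ∣ (A *ᵥ y) i := by
  choose! I J hIJ using hA
  set y : κ → ℤ := fun j => ∏ p ∈ P with J p ≠ j, (p : ℤ)
  have hy : ∀ q : ℕ, q.Prime → ∀ j, (q : ℤ) ∣ y j ↔ q ∈ P ∧ J q ≠ j := by
    intro q hq j
    constructor
    · intro hdvd
      obtain ⟨p, hp, hqp⟩ := ((Nat.prime_iff_prime_int.mp hq).dvd_finsetProd_iff _).mp hdvd
      rw [Finset.mem_filter] at hp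
      obtain rfl : q = p := (Nat.prime_dvd_prime_iff_eq hq (hP p hp.1)).mp
        (Int.natCast_dvd_natCast.mp hqp)
      exact hp
    · rintro ⟨hqP, hqj⟩
      exact Finset.dvd_prod_of_mem _ (Finset.mem_filter.mpr ⟨hqP, hqj⟩)
  refine ⟨y, fun q hq => ⟨J q, fun h => ((hy q hq _).mp h).2 rfl⟩, fun p hp => ⟨I p, ?_⟩⟩
  have hrest : (p : ℤ) ∣ ∑ j ∈ Finset.univ.erase (J p), A (I p) j * y j :=
    Finset.dvd_sum fun j hj =>
      ((hy p (hP p hp) j).mpr ⟨hp, (Finset.ne_of_mem_erase hj).symm⟩).mul_left _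
  rw [mulVec, dotProduct, ← Finset.add_sum_erase _ _ (Finset.mem_univ (J p)),
    dvd_add_left hrest, (Nat.prime_iff_prime_int.mp (hP p hp)).dvd_mul, not_or]
  exact ⟨hIJ p hp, fun h => ((hy p (hP p hp) _).mp h).2 rfl⟩

lemma exists_isPrimitive_mulVec [Nonempty κ] (A : Matrix κ κ ℤ) {c : ℤ} (hc : c ≠ 0)
    (hA : Aᵀ * A = c • 1) (hdvd : ∀ p : ℕ, p.Prime → (p : ℤ) ∣ c → ∃ i j, ¬ (p : ℤ) ∣ A i j) :
    ∃ y, IsPrimitive (A *ᵥ y) := by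
  obtain ⟨y, hy, hAy⟩ := exists_isPrimitive_forall_mem_not_dvd_mulVec A c.natAbs.primeFactors
    (fun p hp => Nat.prime_of_mem_primeFactors hp)
    (fun p hp => hdvd p (Nat.prime_of_mem_primeFactors hp)
      (Int.natCast_dvd.mpr (Nat.dvd_of_mem_primeFactors hp)))
  refine ⟨y, fun p hp => ?_⟩
  by_cases hpc : (p : ℤ) ∣ c
  · exact hAy p (Nat.mem_primeFactors.mpr ⟨hp, Int.natCast_dvd.mp hpc, Int.natAbs_ne_zero.mpr hc⟩)
  by_contra! hpAy
  obtain ⟨j, hj⟩ := hy p hp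
  have hcy : Aᵀ *ᵥ (A *ᵥ y) = c • y := by
    rw [mulVec_mulVec, hA, smul_mulVec, one_mulVec]
  have : (p : ℤ) ∣ c * y j := by
    rw [← smul_eq_mul, ← Pi.smul_apply, ← hcy]
    exact Finset.dvd_sum fun k _ => (hpAy k).mul_left _
  exact hj (((Nat.prime_iff_prime_int.mp hp).dvd_mul.mp this).resolve_left hpc)

end Primitive

def ClearsDenominators (c : ℕ) (M : Matrix ι κ ℝ) : Prop :=
  ∀ i j, ∃ z : ℤ, (c : ℝ) * M i j = z

namespace ClearsDenominators

variable {M : Matrix ι κ ℝ} {c m : ℕ}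

lemma exists_map_intCast_eq (h : ClearsDenominators c M) :
    ∃ A : Matrix ι κ ℤ, A.map (↑) = (c : ℝ) • M := by
  choose A hA using h
  exact ⟨Matrix.of A, by ext i j; simp [hA]⟩

lemma mod (hc : ClearsDenominators c M) (hm : ClearsDenominators m M) :
    ClearsDenominators (c % m) M := by
  intro i j
  obtain ⟨z, hz⟩ := hc i j
  obtain ⟨w, hw⟩ := hm i j
  refine ⟨z - (c / m : ℕ) * w, ?_⟩
  have hmod : ((c % m : ℕ) : ℝ) = c - m * (c / m : ℕ) := by
    rw [eq_sub_iff_add_eq, ← Nat.cast_mul, ← Nat.cast_add, Nat.mod_add_div]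
  rw [hmod, Int.cast_sub, Int.cast_mul, Int.cast_natCast]
  linear_combination hz - ((c / m : ℕ) : ℝ) * hw

lemma dvd_of_isLeast (hm : IsLeast {c : ℕ | 0 < c ∧ ClearsDenominators c M} m)
    (hc : ClearsDenominators c M) : m ∣ c := by
  refine Nat.dvd_of_mod_eq_zero (Nat.eq_zero_of_not_pos fun hpos => ?_)
  have := hm.2 ⟨hpos, hc.mod hm.1.2⟩
  have := Nat.mod_lt c hm.1.1
  omega

lemma exists_not_dvd_of_isLeast (hm : IsLeast {c : ℕ | 0 < c ∧ ClearsDenominators c M} m)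
    {A : Matrix ι κ ℤ} (hA : A.map (↑) = (m : ℝ) • M) {p : ℕ} (hp : p.Prime) (hpm : p ∣ m) :
    ∃ i j, ¬ (p : ℤ) ∣ A i j := by
  by_contra! hpA
  have hdiv : ClearsDenominators (m / p) M := by
    intro i j
    obtain ⟨z, hz⟩ := hpA i j
    refine ⟨z, mul_left_cancel₀ (Nat.cast_ne_zero.mpr hp.ne_zero : (p : ℝ) ≠ 0) ?_⟩
    have hAij : (A i j : ℝ) = m * M i j := by simpa using congrFun₂ hA i j
    rw [← mul_assoc, ← Nat.cast_mul, Nat.mul_div_cancel' hpm, ← Int.cast_natCast p,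
      ← Int.cast_mul, ← hz, hAij]
  have hpos : 0 < m / p := Nat.div_pos (Nat.le_of_dvd hm.1.1 hpm) hp.pos
  have := Nat.le_of_dvd hpos (dvd_of_isLeast hm hdiv)
  have := Nat.div_lt_self hm.1.1 hp.one_lt
  omega

end ClearsDenominators

lemma map_intCast_mulVec_div [Fintype κ] {A : Matrix ι κ ℤ} {M : Matrix ι κ ℝ} {c : ℝ}
    (hc : c ≠ 0) (hA : A.map (↑) = c • M) (y : κ → ℤ) :
    (fun i => ((A *ᵥ y) i : ℝ) / c) = M *ᵥ fun j => (y j : ℝ) := by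
  funext i
  rw [div_eq_iff hc, mul_comm, ← smul_eq_mul, ← Pi.smul_apply, ← smul_mulVec, ← hA]
  exact RingHom.map_mulVec (Int.castRingHom ℝ) A y i

lemma transpose_mul_self_eq_of_map_intCast_eq [Fintype κ] [DecidableEq κ] {A : Matrix κ κ ℤ}
    {R : Matrix κ κ ℝ} {c : ℤ} (hA : A.map (↑) = (c : ℝ) • R) (hR : Rᵀ * R = 1) :
    Aᵀ * A = c ^ 2 • 1 := by
  apply Matrix.map_injective (f := ((↑) : ℤ → ℝ)) Int.cast_injective
  have hmul := Matrix.map_mul (L := Aᵀ) (M := A) (f := Int.castRingHom ℝ)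
  simp only [Int.coe_castRingHom] at hmul
  simp only [hmul, transpose_map, hA, transpose_smul, smul_mul_smul_comm, hR]
  ext i j
  simp only [map_apply, Matrix.smul_apply, one_apply]
  split_ifs <;> simp [sq]

lemma mem_Zd_iff {d : ℕ} {v : Fin d → ℝ} : v ∈ Zd d ↔ ∀ i, ∃ z : ℤ, v i = z := by
  simp [Zd, AddSubgroup.mem_pi, AddSubgroup.mem_zmultiples_iff, eq_comm]

lemma intCast_mem_Zd {d : ℕ} (y : Fin d → ℤ) : (fun i => (y i : ℝ)) ∈ Zd d :=
  mem_Zd_iff.mpr fun i => ⟨y i, rfl⟩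

lemma mulVec_mem_latmap {d : ℕ} (R : Matrix (Fin d) (Fin d) ℝ) {Γ : AddSubgroup (Fin d → ℝ)}
    {w : Fin d → ℝ} (hw : w ∈ Γ) : R *ᵥ w ∈ latmap R Γ :=
  AddSubgroup.mem_map_of_mem _ hw

lemma transpose_mulVec_mem_of_mem_latmap {d : ℕ} {R : Matrix (Fin d) (Fin d) ℝ}
    (hR : Rᵀ * R = 1) {Γ : AddSubgroup (Fin d → ℝ)} {v : Fin d → ℝ} (hv : v ∈ latmap R Γ) :
    Rᵀ *ᵥ v ∈ Γ := by
  obtain ⟨w, hw, rfl⟩ := hv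
  simpa [mulVec_mulVec, hR] using hw

lemma clearsDenominators_relIndex {d : ℕ} {R : Matrix (Fin d) (Fin d) ℝ} (hR : Rᵀ * R = 1) :
    ClearsDenominators ((Zd d ⊓ latmap R (Zd d)).relIndex (Zd d)) R := by
  intro i j
  have hsingle : Pi.single i (1 : ℝ) ∈ Zd d := by
    convert intCast_mem_Zd (Pi.single i 1) using 1
    ext k
    by_cases hk : k = i <;> simp [hk]
  have hn := (AddSubgroup.nsmul_relIndex_mem (Zd d ⊓ latmap R (Zd d)) hsingle).2
  obtain ⟨z, hz⟩ := mem_Zd_iff.mp (transpose_mulVec_mem_of_mem_latmap hR hn) j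
  refine ⟨z, ?_⟩
  rw [← hz, mulVec_smul, mulVec_single_one]
  simp

theorem stmt15_general (m : ℕ) (R : Matrix (Fin 3) (Fin 3) ℝ)
    (hR : R ∈ Matrix.orthogonalGroup (Fin 3) ℝ)
    (hden : IsLeast {c : ℕ | 0 < c ∧ ∀ i j, ∃ z : ℤ, (c : ℝ) * R i j = (z : ℝ)} m) :
    m ∣ (Zd 3 ⊓ latmap R (Zd 3)).relIndex (Zd 3) ∧
    ∃ a : Fin 3 → ℤ, Int.gcd (a 0) (Int.gcd (a 1) (a 2)) = 1 ∧
      (fun i => (a i : ℝ) / (m : ℝ)) ∈ latmap R (Zd 3) := by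
  have hRR : Rᵀ * R = 1 := (mem_orthogonalGroup_iff' _ _).mp hR
  refine ⟨ClearsDenominators.dvd_of_isLeast hden (clearsDenominators_relIndex hRR), ?_⟩
  obtain ⟨A, hA⟩ := ClearsDenominators.exists_map_intCast_eq hden.1.2
  have hAA : Aᵀ * A = (m : ℤ) ^ 2 • 1 := transpose_mul_self_eq_of_map_intCast_eq hA hRR
  obtain ⟨y, hy⟩ := exists_isPrimitive_mulVec A
    (pow_ne_zero 2 (by exact_mod_cast hden.1.1.ne')) hAA
    fun p hp hpm => ClearsDenominators.exists_not_dvd_of_isLeast hden hA hp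
      (Int.natCast_dvd_natCast.mp (Nat.prime_iff_prime_int.mp hp |>.dvd_of_dvd_pow hpm))
  refine ⟨A *ᵥ y, hy.gcd_eq_one, ?_⟩
  rw [map_intCast_mulVec_div (Nat.cast_ne_zero.mpr hden.1.1.ne') hA]
  exact mulVec_mem_latmap R (intCast_mem_Zd y)

/-- For a rational rotation `R ∈ SO(3,ℚ)` the denominator `den(R)` divides the coincidence
index `Σ(R) = [ℤ³ : ℤ³ ∩ Rℤ³]`; indeed `Rℤ³` contains a vector `a/den(R)` with `a ∈ ℤ³`
primitive. -/
theorem stmt15 (m : ℕ) (R : Matrix (Fin 3) (Fin 3) ℝ)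
    (hR : R ∈ Matrix.orthogonalGroup (Fin 3) ℝ) (hdet : R.det = 1)
    (hrat : ∀ i j, ∃ q : ℚ, R i j = (q : ℝ))
    (hden : IsLeast {c : ℕ | 0 < c ∧ ∀ i j, ∃ z : ℤ, (c : ℝ) * R i j = (z : ℝ)} m) :
    m ∣ (Zd 3 ⊓ latmap R (Zd 3)).relIndex (Zd 3) ∧
    ∃ a : Fin 3 → ℤ, Int.gcd (a 0) (Int.gcd (a 1) (a 2)) = 1 ∧
      (fun i => (a i : ℝ) / (m : ℝ)) ∈ latmap R (Zd 3) :=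
  stmt15_general m R hR hden
end
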